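/- For n > 0, the q-Lucas polynomial satisfies L_n(x,s,q) = F_{n+1}(x,s,q) + s·F_{n-1}(x,s,q), where L_n(x,s,q) = ∑_{k=0}^{⌊n/2⌋} q^{C(k,2)} · ([n]/[n-k]) · qbinom(n-k,k) · s^k · x^{n-2k}. -/

import Mathlib

open Finset

noncomputable section

abbrev K : Type := RatFunc ℚ

def q : K := RatFunc.X

def qint (a : K) (m : ℕ) : K := ∑ i ∈ range m, a ^ i

def qfact (a : K) (m : ℕ) : K := ∏ i ∈ range m, qint a (i + 1)

def qbinom (a : K) (n k : ℕ) : K :=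
  if k ≤ n then qfact a n / (qfact a k * qfact a (n - k)) else 0

/-- q-Fibonacci polynomials F_n(x,s,q) with base `a`. -/
def qF (a x s : K) : ℕ → K
  | 0 => 0
  | n + 1 => ∑ k ∈ range (n / 2 + 1),
      a ^ (k * (k + 1) / 2) * qbinom a (n - k) k * s ^ k * x ^ (n - 2 * k)

/-- q-Lucas polynomials L_n(x,s,q) with base `a` (L_0 = 2). -/
def qL (a x s : K) (n : ℕ) : K :=
  if n = 0 then 2 else
  ∑ k ∈ range (n / 2 + 1),
    a ^ (k * (k - 1) / 2) * (qint a n / qint a (n - k)) * qbinom a (n - k) k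
      * s ^ k * x ^ (n - 2 * k)

/-- Starred variant: L*_0 = 1, L*_n = L_n for n > 0. -/
def qLs (a x s : K) (n : ℕ) : K := if n = 0 then 1 else qL a x s n

/-- Rogers-Szegő polynomial. -/
def rs (a x y : K) (m : ℕ) : K := ∑ j ∈ range (m + 1), qbinom a m j * x ^ j * y ^ (m - j)

/-- q-Pochhammer (q;q)_m. -/
def qpoch (a : K) (m : ℕ) : K := ∏ j ∈ range m, (1 - a ^ (j + 1))

/-
Since `[n] = [k] + q^k [n-k]`, the Lucas weight splits as
`[n]/[n-k] · qbinom(n-k,k) = q^k · qbinom(n-k,k) + [k]/[n-k] · qbinom(n-k,k)`, and by absorption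
the last term is `qbinom(n-k-1,k-1)`. Multiplying by `q^{C(k,2)} s^k x^{n-2k}`, the first summand
is the `k`-th term of `F_{n+1}` and the second the `(k-1)`-st term of `s·F_{n-1}`.
-/

lemma qint_add (a : K) (m n : ℕ) : qint a (m + n) = qint a m + a ^ m * qint a n := by
  simp only [qint, sum_range_add, mul_sum, pow_add]

lemma qfact_succ (a : K) (m : ℕ) : qfact a (m + 1) = qfact a m * qint a (m + 1) :=
  prod_range_succ _ _

lemma qint_q_succ_ne_zero (m : ℕ) : qint q (m + 1) ≠ 0 := by
  have h : qint q (m + 1) = algebraMap (Polynomial ℚ) K (∑ i ∈ range (m + 1), Polynomial.X ^ i) := by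
    simp [qint, q, RatFunc.algebraMap_X]
  rw [h]
  refine RatFunc.algebraMap_ne_zero fun h0 => ?_
  have := congrArg (Polynomial.eval (1 : ℚ)) h0
  simp at this
  linarith

lemma qfact_ne_zero {a : K} (ha : ∀ m, qint a (m + 1) ≠ 0) (m : ℕ) : qfact a m ≠ 0 :=
  prod_ne_zero_iff.mpr fun i _ => ha i

lemma qint_mul_qbinom_succ {a : K} (ha : ∀ m, qint a (m + 1) ≠ 0) (m j : ℕ) :
    qint a (j + 1) * qbinom a (m + 1) (j + 1) = qint a (m + 1) * qbinom a m j := by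
  have hfact := qfact_ne_zero ha
  have hj := ha j
  unfold qbinom
  split_ifs with hjm hjm' hjm'
  · rw [Nat.add_sub_add_right, qfact_succ, qfact_succ]
    field_simp
  · omega
  · omega
  · simp

lemma qint_add_div_mul_qbinom {a : K} (ha : ∀ m, qint a (m + 1) ≠ 0) (m j : ℕ) :
    qint a (j + 1 + (m + 1)) / qint a (m + 1) * qbinom a (m + 1) (j + 1)
      = a ^ (j + 1) * qbinom a (m + 1) (j + 1) + qbinom a m j := by
  have hm := ha m
  rw [qint_add, ← mul_div_cancel_left₀ (qbinom a m j) hm, ← qint_mul_qbinom_succ ha]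
  field_simp
  ring

lemma triangle_succ (k : ℕ) : (k + 1) * (k + 2) / 2 = (k + 1) * k / 2 + (k + 1) := by
  rw [show (k + 1) * (k + 2) = (k + 1) * k + 2 * (k + 1) by ring, Nat.add_mul_div_left _ _ two_pos]

lemma qF_eq_sum (a x s : K) (n : ℕ) : qF a x s n = ∑ k ∈ range ((n + 1) / 2),
    a ^ (k * (k + 1) / 2) * qbinom a (n - 1 - k) k * s ^ k * x ^ (n - 1 - 2 * k) := by
  cases n with
  | zero => simp [qF]
  | succ n => rw [qF, show (n + 1 + 1) / 2 = n / 2 + 1 by omega]; rfl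

lemma qL_term_succ {a : K} (ha : ∀ m, qint a (m + 1) ≠ 0) (x s : K) {n k : ℕ}
    (hk : 2 * (k + 1) ≤ n) :
    a ^ ((k + 1) * (k + 1 - 1) / 2) * (qint a n / qint a (n - (k + 1)))
        * qbinom a (n - (k + 1)) (k + 1) * s ^ (k + 1) * x ^ (n - 2 * (k + 1))
      = a ^ ((k + 1) * (k + 1 + 1) / 2) * qbinom a (n - (k + 1)) (k + 1) * s ^ (k + 1)
          * x ^ (n - 2 * (k + 1))
        + s * (a ^ (k * (k + 1) / 2) * qbinom a (n - 1 - 1 - k) k * s ^ k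
          * x ^ (n - 1 - 1 - 2 * k)) := by
  obtain ⟨m, rfl⟩ : ∃ m, n = k + 1 + (m + 1) := ⟨n - k - 2, by omega⟩
  have hcoeff := qint_add_div_mul_qbinom ha m k
  rw [show k + 1 + (m + 1) - (k + 1) = m + 1 by omega, show k + 1 + (m + 1) - 1 - 1 - k = m by omega,
    show k + 1 + (m + 1) - 1 - 1 - 2 * k = k + 1 + (m + 1) - 2 * (k + 1) by omega,
    Nat.add_sub_cancel, triangle_succ, Nat.mul_comm k, pow_add, pow_succ s]
  linear_combination a ^ ((k + 1) * k / 2) * s ^ (k + 1) * x ^ (k + 1 + (m + 1) - 2 * (k + 1)) * hcoeff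

theorem qL_eq_qF_add_mul_qF {a : K} (ha : ∀ m, qint a (m + 1) ≠ 0) (x s : K) {n : ℕ}
    (hn : 0 < n) : qL a x s n = qF a x s (n + 1) + s * qF a x s (n - 1) := by
  rw [qL, if_neg hn.ne', qF_eq_sum, qF_eq_sum, Nat.add_sub_cancel, Nat.sub_add_cancel hn,
    show (n + 1 + 1) / 2 = n / 2 + 1 by omega, sum_range_succ', sum_range_succ', mul_sum,
    add_right_comm, ← sum_add_distrib]
  congr 1
  · exact sum_congr rfl fun k hk => qL_term_succ ha x s (by simp at hk; omega)
  · have : qint a n ≠ 0 := Nat.sub_add_cancel hn ▸ ha (n - 1)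
    simp [div_self this]

theorem stmt3 (x s : K) (n : ℕ) (hn : 0 < n) :
    qL q x s n = qF q x s (n + 1) + s * qF q x s (n - 1) :=
  qL_eq_qF_add_mul_qF qint_q_succ_ne_zero x s hn
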